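/- arXiv:2108.12089 — 2 statements merged into one kernel-verified Lean document; each statement's English description precedes it below -/
import Mathlib

section
/- Let u : [0,1]² → ℝ² be a smooth divergence-free vector field with u²(x,0) = u²(x,1) = 0 for all x ∈ [0,1]. Then there exists a smooth vector field u_E = (u_E¹, u_E²) : ℝ×[0,1] → ℝ², 6-periodic in the x variable, such that: u_E is divergence-free; u_E(x,y) = u(x,y) for all (x,y) ∈ [0,1]²; u_E²(x,0) = u_E²(x,1) = 0 for all x ∈ ℝ; and ∫_{[0,6]×[0,1]} u_E² dx dy = 0. -/
open Set intervalIntegral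

/-- divergence of a planar vector field -/
noncomputable def div2 (f : ℝ → ℝ → ℝ × ℝ) (x y : ℝ) : ℝ :=
  deriv (fun a => (f a y).1) x + deriv (fun b => (f x b).2) y

noncomputable def pInt (f : ℝ × ℝ → ℝ) (q : ℝ × ℝ) : ℝ := ∫ t in (0:ℝ)..q.2, f (q.1, t)
noncomputable def pdx (f : ℝ × ℝ → ℝ) (q : ℝ × ℝ) : ℝ := fderiv ℝ f q (1, 0)
noncomputable def pdy (f : ℝ × ℝ → ℝ) (q : ℝ × ℝ) : ℝ := fderiv ℝ f q (0, 1)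

variable {f : ℝ × ℝ → ℝ}

lemma contDiff_pdx (hf : ContDiff ℝ (⊤:ℕ∞) f) : ContDiff ℝ (⊤:ℕ∞) (pdx f) := by
  exact (hf.fderiv_right (le_refl _)).clm_apply contDiff_const

lemma contDiff_pdy (hf : ContDiff ℝ (⊤:ℕ∞) f) : ContDiff ℝ (⊤:ℕ∞) (pdy f) := by
  exact (hf.fderiv_right (le_refl _)).clm_apply contDiff_const

lemma hasDerivAt_slice1 (hf : ContDiff ℝ (⊤:ℕ∞) f) (x y : ℝ) :
    HasDerivAt (fun a => f (a, y)) (pdx f (x, y)) x := by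
  have h1 : HasDerivAt (fun a : ℝ => (a, y)) ((1:ℝ), (0:ℝ)) x :=
    (hasDerivAt_id x).prodMk (hasDerivAt_const x y)
  exact ((hf.differentiable (by simp) (x, y)).hasFDerivAt).comp_hasDerivAt x h1

lemma hasDerivAt_slice2 (hf : ContDiff ℝ (⊤:ℕ∞) f) (x y : ℝ) :
    HasDerivAt (fun b => f (x, b)) (pdy f (x, y)) y := by
  have h1 : HasDerivAt (fun b : ℝ => (x, b)) ((0:ℝ), (1:ℝ)) y :=
    (hasDerivAt_const y x).prodMk (hasDerivAt_id y)
  exact ((hf.differentiable (by simp) (x, y)).hasFDerivAt).comp_hasDerivAt y h1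

open scoped ContDiff

lemma continuous_slice2 (hf : ContDiff ℝ (⊤:ℕ∞) f) (x : ℝ) : Continuous (fun t => f (x, t)) :=
  hf.continuous.comp (continuous_const.prodMk continuous_id)

/-- differentiation under the interval integral, fixed endpoint -/
lemma hasDerivAt_pInt_param (hf : ContDiff ℝ (⊤:ℕ∞) f) (x₀ b : ℝ) :
    HasDerivAt (fun x => ∫ t in (0:ℝ)..b, f (x, t)) (∫ t in (0:ℝ)..b, pdx f (x₀, t)) x₀ := by
  obtain ⟨C, hC⟩ : ∃ C, ∀ q ∈ (Icc (x₀-1) (x₀+1)) ×ˢ (uIcc (0:ℝ) b), ‖pdx f q‖ ≤ C :=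
    ((isCompact_Icc.prod isCompact_uIcc).exists_bound_of_continuousOn
      ((contDiff_pdx hf).continuous.continuousOn))
  have h := intervalIntegral.hasDerivAt_integral_of_dominated_loc_of_deriv_le
    (F := fun x t => f (x, t)) (F' := fun x t => pdx f (x, t)) (bound := fun _ => C)
    (μ := MeasureTheory.volume) (a := (0:ℝ)) (b := b) (x₀ := x₀) (s := Metric.ball x₀ 1)
      (Metric.ball_mem_nhds x₀ one_pos)
    (Filter.Eventually.of_forall fun x => (continuous_slice2 hf x).aestronglyMeasurable)
    ((continuous_slice2 hf x₀).intervalIntegrable 0 b)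
    ((contDiff_pdx hf).continuous.comp (continuous_const.prodMk continuous_id)).aestronglyMeasurable
    (MeasureTheory.ae_of_all _ fun t ht x hx => hC (x, t)
      ⟨⟨by have := abs_lt.1 (by simpa [Real.dist_eq] using hx); linarith [this.1],
          by have := abs_lt.1 (by simpa [Real.dist_eq] using hx); linarith [this.2]⟩,
        uIoc_subset_uIcc ht⟩)
    (intervalIntegrable_const)
    (MeasureTheory.ae_of_all _ fun t _ x _ => hasDerivAt_slice1 hf x t)
  exact h.2

/-- Joint Fréchet derivative of the parametric integral. -/
lemma hasFDerivAt_pInt (hf : ContDiff ℝ (⊤:ℕ∞) f) (p : ℝ × ℝ) :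
    HasFDerivAt (pInt f)
      ((pInt (pdx f) p) • (ContinuousLinearMap.fst ℝ ℝ ℝ)
        + (f p) • (ContinuousLinearMap.snd ℝ ℝ ℝ)) p := by
  obtain ⟨x₀, y₀⟩ := p
  rw [hasFDerivAt_iff_isLittleO]
  set p₀ : ℝ × ℝ := (x₀, y₀) with hp₀
  set a : ℝ := pInt (pdx f) p₀ with ha
  have hφ : HasDerivAt (fun x => ∫ t in (0:ℝ)..y₀, f (x, t)) a x₀ := hasDerivAt_pInt_param hf x₀ y₀
  have T1 : (fun p : ℝ × ℝ => (∫ t in (0:ℝ)..y₀, f (p.1, t)) - (∫ t in (0:ℝ)..y₀, f (x₀, t))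
      - (p.1 - x₀) • a) =o[nhds p₀] (fun p => p - p₀) := by
    have h1 := (hasDerivAt_iff_isLittleO.1 hφ).comp_tendsto (continuous_fst.tendsto p₀)
    have h2 : (fun p : ℝ × ℝ => p.1 - x₀) =O[nhds p₀] fun p => p - p₀ :=
      Asymptotics.IsBigO.of_bound 1 (Filter.Eventually.of_forall fun p => by
        simpa [hp₀] using norm_fst_le (p - p₀))
    exact h1.trans_isBigO h2
  have T2 : (fun p : ℝ × ℝ => (∫ t in y₀..p.2, f (p.1, t)) - (p.2 - y₀) * f p₀)
      =o[nhds p₀] (fun p => p - p₀) := by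
    rw [Asymptotics.isLittleO_iff]
    intro c hc
    obtain ⟨δ, hδ, hball⟩ := Metric.continuousAt_iff.1 hf.continuous.continuousAt (ε := c) hc
    filter_upwards [Metric.ball_mem_nhds p₀ hδ] with p hp
    have key : ∀ t ∈ Set.uIoc y₀ p.2, ‖f (p.1, t) - f p₀‖ ≤ c := by
      intro t ht
      have ht' := uIoc_subset_uIcc ht
      have h1 : |t - y₀| ≤ |p.2 - y₀| := by
        rcases Set.mem_uIcc.1 ht' with h | h
        · rw [abs_of_nonneg (by linarith [h.1]), abs_of_nonneg (by linarith [h.1, h.2])]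
          linarith [h.2]
        · rw [abs_of_nonpos (by linarith [h.2]), abs_of_nonpos (by linarith [h.1, h.2])]
          linarith [h.1]
      have hd : dist (p.1, t) p₀ < δ := by
        have hpd : dist p p₀ = max (dist p.1 x₀) (dist p.2 y₀) := Prod.dist_eq
        have hp' : dist p p₀ < δ := hp
        rw [hpd] at hp'
        have h2 : dist p.1 x₀ < δ := lt_of_le_of_lt (le_max_left _ _) hp'
        have h3 : dist t y₀ < δ := by
          have h4 : dist p.2 y₀ < δ := lt_of_le_of_lt (le_max_right _ _) hp'
          rw [Real.dist_eq] at h4 ⊢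
          exact lt_of_le_of_lt h1 h4
        calc dist (p.1, t) p₀ = max (dist p.1 x₀) (dist t y₀) := rfl
          _ < δ := max_lt h2 h3
      exact le_of_lt (by simpa [dist_eq_norm] using hball hd)
    have hrw : (∫ t in y₀..p.2, f (p.1, t)) - (p.2 - y₀) * f p₀
        = ∫ t in y₀..p.2, (f (p.1, t) - f p₀) := by
      rw [intervalIntegral.integral_sub ((continuous_slice2 hf p.1).intervalIntegrable _ _)
        (intervalIntegrable_const), intervalIntegral.integral_const]
      ring_nf
    rw [hrw]
    calc ‖∫ t in y₀..p.2, (f (p.1, t) - f p₀)‖ ≤ c * |p.2 - y₀| :=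
        intervalIntegral.norm_integral_le_of_norm_le_const key
      _ ≤ c * ‖p - p₀‖ := by
          apply mul_le_mul_of_nonneg_left _ hc.le
          have h5 : p.2 - y₀ = (p - p₀).2 := by simp [hp₀]
          rw [h5]
          exact norm_snd_le (p - p₀)
  have heq : ∀ p : ℝ × ℝ, pInt f p - pInt f p₀
      - ((pInt (pdx f) p₀) • (ContinuousLinearMap.fst ℝ ℝ ℝ)
        + (f p₀) • (ContinuousLinearMap.snd ℝ ℝ ℝ)) (p - p₀)
      = ((∫ t in (0:ℝ)..y₀, f (p.1, t)) - (∫ t in (0:ℝ)..y₀, f (x₀, t)) - (p.1 - x₀) • a)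
        + ((∫ t in y₀..p.2, f (p.1, t)) - (p.2 - y₀) * f p₀) := by
    intro p
    have hsplit : (∫ t in (0:ℝ)..y₀, f (p.1, t)) + (∫ t in y₀..p.2, f (p.1, t))
        = ∫ t in (0:ℝ)..p.2, f (p.1, t) :=
      intervalIntegral.integral_add_adjacent_intervals
        ((continuous_slice2 hf p.1).intervalIntegrable _ _)
        ((continuous_slice2 hf p.1).intervalIntegrable _ _)
    have h1 : pInt f p = ∫ t in (0:ℝ)..p.2, f (p.1, t) := rfl
    have h2 : pInt f p₀ = ∫ t in (0:ℝ)..y₀, f (x₀, t) := rfl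
    rw [h1, h2, ← hsplit]
    simp [ha, smul_eq_mul, hp₀]
    ring
  exact ((T1.add T2).congr' (Filter.Eventually.of_forall fun p => (heq p).symm)
    (Filter.EventuallyEq.refl _ _))

lemma fderiv_pInt (hf : ContDiff ℝ (⊤:ℕ∞) f) :
    fderiv ℝ (pInt f) = fun p => (pInt (pdx f) p) • (ContinuousLinearMap.fst ℝ ℝ ℝ)
        + (f p) • (ContinuousLinearMap.snd ℝ ℝ ℝ) :=
  funext fun p => (hasFDerivAt_pInt hf p).fderiv

lemma contDiff_pInt (hf : ContDiff ℝ (⊤:ℕ∞) f) : ContDiff ℝ (⊤:ℕ∞) (pInt f) := by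
  suffices H : ∀ n : ℕ, ∀ g : ℝ × ℝ → ℝ, ContDiff ℝ (⊤:ℕ∞) g → ContDiff ℝ (n:ℕ∞) (pInt g) by
    rw [show ((⊤:ℕ∞) : WithTop ℕ∞) = ∞ from rfl, contDiff_infty]
    exact fun n => H n f hf
  intro n
  induction n with
  | zero =>
    intro g hg
    rw [show ((0:ℕ):ℕ∞) = 0 by rfl]
    exact contDiff_zero.2 (continuous_iff_continuousAt.2 fun p => (hasFDerivAt_pInt hg p).continuousAt)
  | succ n ih =>
    intro g hg
    rw [show (((n+1:ℕ):ℕ∞) : WithTop ℕ∞) = ((n:ℕ∞):WithTop ℕ∞) + 1 by exact_mod_cast rfl]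
    rw [contDiff_succ_iff_fderiv]
    refine ⟨fun p => (hasFDerivAt_pInt hg p).differentiableAt, ?_, ?_⟩
    · simp
    · rw [fderiv_pInt hg]
      exact ((ih (pdx g) (contDiff_pdx hg)).smul contDiff_const).add
        (((hg.of_le (mod_cast le_top)).smul contDiff_const))

lemma pdx_pInt (hf : ContDiff ℝ (⊤:ℕ∞) f) : pdx (pInt f) = pInt (pdx f) := by
  funext q
  have h := (hasFDerivAt_pInt hf q).fderiv
  show fderiv ℝ (pInt f) q (1, 0) = _
  rw [h]
  simp

lemma pdy_pInt (hf : ContDiff ℝ (⊤:ℕ∞) f) : pdy (pInt f) = f := by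
  funext q
  have h := (hasFDerivAt_pInt hf q).fderiv
  show fderiv ℝ (pInt f) q (0, 1) = _
  rw [h]
  simp

lemma pInt_base (x : ℝ) : pInt f (x, 0) = 0 := intervalIntegral.integral_same

lemma deriv_slice1 (hf : ContDiff ℝ (⊤:ℕ∞) f) (x y : ℝ) :
    deriv (fun a => f (a, y)) x = pdx f (x, y) := (hasDerivAt_slice1 hf x y).deriv

lemma deriv_slice2 (hf : ContDiff ℝ (⊤:ℕ∞) f) (x y : ℝ) :
    deriv (fun b => f (x, b)) y = pdy f (x, y) := (hasDerivAt_slice2 hf x y).deriv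

noncomputable section Constr

def χb : ContDiffBump ((1:ℝ)/2) := ⟨3/4, 5/4, by norm_num, by norm_num⟩
def χ : ℝ → ℝ := χb
def χ' : ℝ → ℝ := deriv χ
def η : ℝ → ℝ := Real.smoothTransition
def η' : ℝ → ℝ := deriv η

lemma contDiff_χ : ContDiff ℝ (⊤:ℕ∞) χ := χb.contDiff
lemma contDiff_η : ContDiff ℝ (⊤:ℕ∞) η := Real.smoothTransition.contDiff

lemma contDiff_χ' : ContDiff ℝ (⊤:ℕ∞) χ' := (contDiff_infty_iff_deriv.1 contDiff_χ).2
lemma contDiff_η' : ContDiff ℝ (⊤:ℕ∞) η' := (contDiff_infty_iff_deriv.1 contDiff_η).2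

lemma hasDerivAt_χ (a : ℝ) : HasDerivAt χ (χ' a) a :=
  (contDiff_χ.differentiable (by simp) a).hasDerivAt
lemma hasDerivAt_η (y : ℝ) : HasDerivAt η (η' y) y :=
  (contDiff_η.differentiable (by simp) y).hasDerivAt

lemma χ_one {x : ℝ} (hx : x ∈ Icc (0:ℝ) 1) : χ x = 1 := by
  apply χb.one_of_mem_closedBall
  simp only [Metric.mem_closedBall, Real.dist_eq, χb]
  rw [abs_le]; constructor <;> [linarith [hx.1]; linarith [hx.2]]

lemma χ'_zero {x : ℝ} (hx : x ∈ Icc (0:ℝ) 1) : χ' x = 0 := by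
  have hev : χ =ᶠ[nhds x] fun _ => 1 := by
    have hball : Metric.ball ((1:ℝ)/2) (3/4) ∈ nhds x := by
      apply Metric.isOpen_ball.mem_nhds
      simp only [Metric.mem_ball, Real.dist_eq]
      rw [abs_lt]; constructor <;> [linarith [hx.1]; linarith [hx.2]]
    filter_upwards [hball] with z hz
    exact χb.one_of_mem_closedBall (Metric.ball_subset_closedBall hz)
  rw [χ', hev.deriv_eq]
  exact deriv_const _ _

lemma χ_dead {a : ℝ} (ha : a ≤ -1 ∨ 2 ≤ a) : χ a = 0 ∧ χ' a = 0 := by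
  constructor
  · apply χb.zero_of_le_dist
    simp only [Real.dist_eq, χb]
    rcases ha with h | h
    · rw [abs_of_nonpos (by linarith)]; linarith
    · rw [abs_of_nonneg (by linarith)]; linarith
  · have hev : χ =ᶠ[nhds a] fun _ => 0 := by
      have hopen : IsOpen {z : ℝ | (5:ℝ)/4 < |z - 1/2|} := by
        have : Continuous fun z : ℝ => |z - 1/2| := (continuous_id.sub continuous_const).abs
        exact isOpen_lt continuous_const this
      have hmem : a ∈ {z : ℝ | (5:ℝ)/4 < |z - 1/2|} := by
        simp only [mem_setOf_eq]
        rcases ha with h | h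
        · rw [abs_of_nonpos (by linarith)]; linarith
        · rw [abs_of_nonneg (by linarith)]; linarith
      filter_upwards [hopen.mem_nhds hmem] with z hz
      exact χb.zero_of_le_dist (by simp only [Real.dist_eq, χb]; exact le_of_lt hz)
    rw [χ', hev.deriv_eq]
    exact deriv_const _ _

variable (f : ℝ × ℝ → ℝ)

def Af : ℝ × ℝ → ℝ := pInt (pdx f)
def wf (x : ℝ) : ℝ := pInt f (x, 1)
def cf : ℝ := pInt f (0, 1)
def v1 (a y : ℝ) : ℝ := χ a * f (a, y) + (cf f - χ a * wf f a) * η' y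
def v2 (a y : ℝ) : ℝ :=
  -(χ' a * pInt f (a, y) + χ a * Af f (a, y)) + η y * (χ' a * wf f a + χ a * Af f (a, 1))
def rr (x : ℝ) : ℝ := x - 6 * (⌊(x + 1) / 6⌋ : ℤ)
def uEf (x y : ℝ) : ℝ × ℝ := (v1 f (rr x) y, v2 f (rr x) y)

end Constr

section Props
open scoped ContDiff
variable {f : ℝ × ℝ → ℝ} (hf : ContDiff ℝ (⊤:ℕ∞) f)
include hf

lemma contDiff_Af : ContDiff ℝ (⊤:ℕ∞) (Af f) := contDiff_pInt (contDiff_pdx hf)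

lemma contDiff_v1 : ContDiff ℝ (⊤:ℕ∞) (fun q : ℝ × ℝ => v1 f q.1 q.2) := by
  have h1 : ContDiff ℝ (⊤:ℕ∞) (fun q : ℝ × ℝ => f (q.1, q.2)) :=
    hf.comp (contDiff_fst.prodMk contDiff_snd)
  exact ((contDiff_χ.comp contDiff_fst).mul h1).add
    ((contDiff_const.sub ((contDiff_χ.comp contDiff_fst).mul
      ((contDiff_pInt hf).comp (contDiff_fst.prodMk contDiff_const)))).mul
      (contDiff_η'.comp contDiff_snd))

lemma contDiff_v2 : ContDiff ℝ (⊤:ℕ∞) (fun q : ℝ × ℝ => v2 f q.1 q.2) := by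
  have hA : ContDiff ℝ (⊤:ℕ∞) (fun q : ℝ × ℝ => Af f (q.1, q.2)) :=
    (contDiff_Af hf).comp (contDiff_fst.prodMk contDiff_snd)
  have hP : ContDiff ℝ (⊤:ℕ∞) (fun q : ℝ × ℝ => pInt f (q.1, q.2)) :=
    (contDiff_pInt hf).comp (contDiff_fst.prodMk contDiff_snd)
  exact (((contDiff_χ'.comp contDiff_fst).mul hP).add
      ((contDiff_χ.comp contDiff_fst).mul hA)).neg.add
    ((contDiff_η.comp contDiff_snd).mul
      (((contDiff_χ'.comp contDiff_fst).mul
        ((contDiff_pInt hf).comp (contDiff_fst.prodMk contDiff_const))).add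
        ((contDiff_χ.comp contDiff_fst).mul
          ((contDiff_Af hf).comp (contDiff_fst.prodMk contDiff_const)))))

lemma hasDerivAt_wf (a : ℝ) : HasDerivAt (wf f) (Af f (a, 1)) a := by
  have h := hasDerivAt_slice1 (contDiff_pInt hf) a 1
  rwa [pdx_pInt hf] at h

lemma hasDerivAt_v1x (a y : ℝ) :
    HasDerivAt (fun s => v1 f s y)
      (χ' a * f (a, y) + χ a * pdx f (a, y)
        - (χ' a * wf f a + χ a * Af f (a, 1)) * η' y) a := by
  have h1 := (hasDerivAt_χ a).mul (hasDerivAt_slice1 hf a y)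
  have h2 := (((hasDerivAt_χ a).mul (hasDerivAt_wf hf a)).const_sub (cf f)).mul_const (η' y)
  have := h1.add h2
  exact this.congr_deriv (by ring)

lemma hasDerivAt_v2y (a y : ℝ) :
    HasDerivAt (fun t => v2 f a t)
      (-(χ' a * f (a, y) + χ a * pdx f (a, y))
        + η' y * (χ' a * wf f a + χ a * Af f (a, 1))) y := by
  have hP : HasDerivAt (fun t => pInt f (a, t)) (f (a, y)) y := by
    have h := hasDerivAt_slice2 (contDiff_pInt hf) a y
    rwa [pdy_pInt hf] at h
  have hA : HasDerivAt (fun t => Af f (a, t)) (pdx f (a, y)) y := by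
    have h := hasDerivAt_slice2 (contDiff_pInt (contDiff_pdx hf)) a y
    rwa [pdy_pInt (contDiff_pdx hf)] at h
  have h1 := ((hP.const_mul (χ' a)).add (hA.const_mul (χ a))).neg
  have h2 := (hasDerivAt_η y).mul_const (χ' a * wf f a + χ a * Af f (a, 1))
  have := h1.add h2
  exact this

lemma div_v (a y : ℝ) :
    deriv (fun s => v1 f s y) a + deriv (fun t => v2 f a t) y = 0 := by
  rw [(hasDerivAt_v1x hf a y).deriv, (hasDerivAt_v2y hf a y).deriv]
  ring

omit hf

lemma v_dead {a : ℝ} (ha : a ≤ -1 ∨ 2 ≤ a) (y : ℝ) :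
    v1 f a y = cf f * η' y ∧ v2 f a y = 0 := by
  obtain ⟨h0, h1⟩ := χ_dead ha
  constructor <;> simp [v1, v2, h0, h1]

lemma v2_bot (a : ℝ) : v2 f a 0 = 0 := by
  simp [v2, Af, pInt_base, Real.smoothTransition.zero, η]

lemma v2_top (a : ℝ) : v2 f a 1 = 0 := by
  simp only [v2, η, Real.smoothTransition.one, one_mul, wf]
  ring

end Props

section RR

lemma rr_eq {x : ℝ} {k : ℤ} (h1 : 6*(k:ℝ) - 1 ≤ x) (h2 : x < 6*(k:ℝ) + 5) :
    rr x = x - 6*(k:ℝ) := by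
  have hfl : ⌊(x + 1) / 6⌋ = k := by
    rw [Int.floor_eq_iff]
    constructor
    · rw [le_div_iff₀ (by norm_num : (0:ℝ) < 6)]; linarith
    · rw [div_lt_iff₀ (by norm_num : (0:ℝ) < 6)]; push_cast; linarith
  rw [rr, hfl]

lemma rr_period (x : ℝ) : rr (x + 6) = rr x := by
  have : (x + 6 + 1) / 6 = (x + 1) / 6 + 1 := by ring
  rw [rr, rr, this, Int.floor_add_one]
  push_cast
  ring

lemma rr_loc (f : ℝ × ℝ → ℝ) (x : ℝ) :
    ∃ k : ℤ, ∀ᶠ x' in nhds x, ∀ y : ℝ,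
      uEf f x' y = (v1 f (x' - 6*(k:ℝ)) y, v2 f (x' - 6*(k:ℝ)) y) := by
  set k := ⌊(x + 1) / 6⌋ with hk
  refine ⟨k, ?_⟩
  have hb1 : 6*(k:ℝ) - 1 ≤ x := by
    have := Int.floor_le ((x + 1) / 6)
    rw [← hk] at this
    have := (le_div_iff₀ (by norm_num : (0:ℝ) < 6)).1 this
    linarith
  have hb2 : x < 6*(k:ℝ) + 5 := by
    have := Int.lt_floor_add_one ((x + 1) / 6)
    rw [← hk] at this
    have := (div_lt_iff₀ (by norm_num : (0:ℝ) < 6)).1 this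
    push_cast at this
    linarith
  rcases lt_or_eq_of_le hb1 with hgt | heq
  · have hmem : x ∈ Ioo (6*(k:ℝ) - 1) (6*(k:ℝ) + 5) := ⟨hgt, hb2⟩
    filter_upwards [isOpen_Ioo.mem_nhds hmem] with x' hx' y
    rw [uEf, rr_eq (le_of_lt hx'.1) hx'.2]
  · -- junction: x = 6k - 1
    have hmem : x ∈ Ioo (6*(k:ℝ) - 2) (6*(k:ℝ) + 5) := ⟨by linarith, hb2⟩
    filter_upwards [isOpen_Ioo.mem_nhds hmem] with x' hx' y
    rcases le_or_gt (6*(k:ℝ) - 1) x' with hge | hlt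
    · rw [uEf, rr_eq hge hx'.2]
    · have hrr : rr x' = x' - 6*((k:ℝ) - 1) := by
        have : ((k - 1 : ℤ) : ℝ) = (k:ℝ) - 1 := by push_cast; ring
        rw [show x' - 6*((k:ℝ) - 1) = x' - 6*((k-1:ℤ):ℝ) by rw [this]]
        apply rr_eq <;> rw [this] <;> [linarith [hx'.1]; linarith]
      have hd1 : (2:ℝ) ≤ x' - 6*((k:ℝ) - 1) := by linarith [hx'.1]
      have hd2 : x' - 6*(k:ℝ) ≤ -1 := by linarith
      obtain ⟨e1, e2⟩ := v_dead (f := f) (Or.inr hd1) y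
      obtain ⟨e1', e2'⟩ := v_dead (f := f) (Or.inl hd2) y
      rw [uEf, hrr, e1, e2, e1', e2']

lemma rr_Icc01 {x : ℝ} (hx : x ∈ Icc (0:ℝ) 1) : rr x = x := by
  have := rr_eq (x := x) (k := 0) (by push_cast; linarith [hx.1]) (by push_cast; linarith [hx.2])
  simpa using this

end RR

section Jsec
variable {f : ℝ × ℝ → ℝ} (hf : ContDiff ℝ (⊤:ℕ∞) f)

noncomputable def Jf (f : ℝ × ℝ → ℝ) (a : ℝ) : ℝ := ∫ y in (0:ℝ)..1, v2 f a y
noncomputable def Ef : ℝ := ∫ y in (0:ℝ)..1, η y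
noncomputable def Sf (f : ℝ × ℝ → ℝ) (a : ℝ) : ℝ :=
  -(χ a * wf (pInt f) a) + (χ a * wf f a) * Ef

include hf

lemma Jsplit (a : ℝ) : Jf f a =
    -(χ' a * wf (pInt f) a + χ a * wf (Af f) a)
      + (χ' a * wf f a + χ a * Af f (a, 1)) * Ef := by
  have hc1 : Continuous fun y => pInt f (a, y) := continuous_slice2 (contDiff_pInt hf) a
  have hc2 : Continuous fun y => Af f (a, y) :=
    continuous_slice2 (contDiff_pInt (contDiff_pdx hf)) a
  have hcη : Continuous η := contDiff_η.continuous
  have hint1 : IntervalIntegrable (fun y => -(χ' a * pInt f (a, y) + χ a * Af f (a, y)))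
      MeasureTheory.volume 0 1 :=
    (((continuous_const.mul hc1).add (continuous_const.mul hc2)).neg).intervalIntegrable 0 1
  have hint2 : IntervalIntegrable
      (fun y => η y * (χ' a * wf f a + χ a * Af f (a, 1))) MeasureTheory.volume 0 1 :=
    (hcη.mul continuous_const).intervalIntegrable 0 1
  rw [Jf]
  simp only [v2]
  rw [intervalIntegral.integral_add hint1 hint2, intervalIntegral.integral_neg,
    intervalIntegral.integral_add (f := fun y => χ' a * pInt f (a, y))
      (g := fun y => χ a * Af f (a, y)) ((continuous_const.mul hc1).intervalIntegrable 0 1)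
      ((continuous_const.mul hc2).intervalIntegrable 0 1),
    intervalIntegral.integral_const_mul, intervalIntegral.integral_const_mul,
    intervalIntegral.integral_mul_const]
  have e1 : wf (pInt f) a = ∫ x in (0:ℝ)..1, pInt f (a, x) := rfl
  have e2 : wf (Af f) a = ∫ x in (0:ℝ)..1, Af f (a, x) := rfl
  have e3 : Ef = ∫ x in (0:ℝ)..1, η x := rfl
  rw [e1, e2, e3]
  ring

lemma hasDerivAt_Sf (a : ℝ) : HasDerivAt (Sf f) (Jf f a) a := by
  have hQ : HasDerivAt (wf (pInt f)) (wf (Af f) a) a := by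
    have h := hasDerivAt_wf (contDiff_pInt hf) a
    rwa [show Af (pInt f) = pInt (Af f) by rw [Af, pdx_pInt hf]; rfl] at h
  have hw := hasDerivAt_wf hf a
  have h1 := (((hasDerivAt_χ a).mul hQ).neg).add
    (((hasDerivAt_χ a).mul hw).mul_const Ef)
  rw [Jsplit hf a]
  exact h1

lemma cont_Jf : Continuous (Jf f) := by
  have : Jf f = fun a => -(χ' a * wf (pInt f) a + χ a * wf (Af f) a)
      + (χ' a * wf f a + χ a * Af f (a, 1)) * Ef := funext fun a => Jsplit hf a
  rw [this]
  have cwf : ∀ (g : ℝ × ℝ → ℝ), ContDiff ℝ (⊤:ℕ∞) g → Continuous (wf g) := fun g hg =>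
    (contDiff_pInt hg).continuous.comp (continuous_id.prodMk continuous_const)
  have cA : Continuous fun a => Af f (a, 1) :=
    (contDiff_Af hf).continuous.comp (continuous_id.prodMk continuous_const)
  exact (((contDiff_χ'.continuous.mul (cwf _ (contDiff_pInt hf))).add
    (contDiff_χ.continuous.mul (cwf _ (contDiff_Af hf)))).neg).add
    (((contDiff_χ'.continuous.mul (cwf _ hf)).add (contDiff_χ.continuous.mul cA)).mul
      continuous_const)

omit hf

lemma Jf_dead {a : ℝ} (ha : a ≤ -1 ∨ 2 ≤ a) : Jf f a = 0 := by
  rw [Jf]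
  rw [intervalIntegral.integral_congr (g := fun _ => (0:ℝ))
    (fun y _ => (v_dead (f := f) ha y).2)]
  simp

lemma Sf_dead {a : ℝ} (ha : a ≤ -1 ∨ 2 ≤ a) : Sf f a = 0 := by
  rw [Sf, (χ_dead ha).1]
  ring

end Jsec

theorem periodic_divfree_extension
    (u : ℝ → ℝ → ℝ × ℝ)
    (hu : ContDiff ℝ (⊤ : ℕ∞) (fun q : ℝ × ℝ => u q.1 q.2))
    (hdiv : ∀ x ∈ Icc (0:ℝ) 1, ∀ y ∈ Icc (0:ℝ) 1, div2 u x y = 0)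
    (hbc : ∀ x ∈ Icc (0:ℝ) 1, (u x 0).2 = 0 ∧ (u x 1).2 = 0) :
    ∃ uE : ℝ → ℝ → ℝ × ℝ,
      ContDiff ℝ (⊤ : ℕ∞) (fun q : ℝ × ℝ => uE q.1 q.2) ∧
      (∀ x : ℝ, ∀ y ∈ Icc (0:ℝ) 1, uE (x + 6) y = uE x y) ∧
      (∀ x : ℝ, ∀ y ∈ Icc (0:ℝ) 1, div2 uE x y = 0) ∧
      (∀ x ∈ Icc (0:ℝ) 1, ∀ y ∈ Icc (0:ℝ) 1, uE x y = u x y) ∧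
      (∀ x : ℝ, (uE x 0).2 = 0 ∧ (uE x 1).2 = 0) ∧
      (∫ x in (0:ℝ)..6, ∫ y in (0:ℝ)..1, (uE x y).2) = 0 := by
  classical
  set f : ℝ × ℝ → ℝ := fun q => (u q.1 q.2).1 with hfdef
  set g : ℝ × ℝ → ℝ := fun q => (u q.1 q.2).2 with hgdef
  have hf : ContDiff ℝ (⊤:ℕ∞) f := hu.fst
  have hg : ContDiff ℝ (⊤:ℕ∞) g := hu.snd
  have hbc0 : ∀ x ∈ Icc (0:ℝ) 1, g (x, 0) = 0 := fun x hx => (hbc x hx).1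
  have hbc1 : ∀ x ∈ Icc (0:ℝ) 1, g (x, 1) = 0 := fun x hx => (hbc x hx).2
  have hdx : ∀ x y : ℝ, deriv (fun a => (u a y).1) x = pdx f (x, y) :=
    fun x y => (hasDerivAt_slice1 hf x y).deriv
  have hdy : ∀ x y : ℝ, deriv (fun b => (u x b).2) y = pdy g (x, y) :=
    fun x y => (hasDerivAt_slice2 hg x y).deriv
  have hdiv' : ∀ x ∈ Icc (0:ℝ) 1, ∀ y ∈ Icc (0:ℝ) 1, pdx f (x, y) = -pdy g (x, y) := by
    intro x hx y hy
    have h := hdiv x hx y hy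
    rw [div2, hdx, hdy] at h
    linarith
  have FA : ∀ x ∈ Icc (0:ℝ) 1, ∀ y ∈ Icc (0:ℝ) 1, Af f (x, y) = -g (x, y) := by
    intro x hx y hy
    have hI : (∫ t in (0:ℝ)..y, pdy g (x, t)) = g (x, y) - g (x, 0) := by
      apply intervalIntegral.integral_deriv_eq_sub' (fun b => g (x, b))
      · exact funext fun t => (hasDerivAt_slice2 hg x t).deriv
      · exact fun t _ => (hasDerivAt_slice2 hg x t).differentiableAt
      · exact (continuous_slice2 (contDiff_pdy hg) x).continuousOn
    have hcongr : Af f (x, y) = ∫ t in (0:ℝ)..y, -pdy g (x, t) := by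
      apply intervalIntegral.integral_congr
      intro t ht
      rw [uIcc_of_le hy.1] at ht
      exact hdiv' x hx t ⟨ht.1, le_trans ht.2 hy.2⟩
    rw [hcongr, intervalIntegral.integral_neg, hI, hbc0 x hx]
    ring
  have FA1 : ∀ x ∈ Icc (0:ℝ) 1, Af f (x, 1) = 0 := by
    intro x hx
    rw [FA x hx 1 (by norm_num), hbc1 x hx, neg_zero]
  have FW : ∀ x ∈ Icc (0:ℝ) 1, wf f x = cf f := by
    intro x hx
    have h1 : (∫ t in (0:ℝ)..x, Af f (t, 1)) = wf f x - wf f 0 := by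
      apply intervalIntegral.integral_deriv_eq_sub' (wf f)
      · exact funext fun t => (hasDerivAt_wf hf t).deriv
      · exact fun t _ => (hasDerivAt_wf hf t).differentiableAt
      · exact ((contDiff_Af hf).continuous.comp
          (continuous_id.prodMk continuous_const)).continuousOn
    have h2 : (∫ t in (0:ℝ)..x, Af f (t, 1)) = 0 := by
      rw [intervalIntegral.integral_congr (g := fun _ => (0:ℝ)) ?_]
      · simp
      · intro t ht
        rw [uIcc_of_le hx.1] at ht
        exact FA1 t ⟨ht.1, le_trans ht.2 hx.2⟩
    have h3 : wf f 0 = cf f := rfl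
    rw [h2] at h1
    linarith
  refine ⟨uEf f, ?_, ?_, ?_, ?_, ?_, ?_⟩
  · -- smoothness
    rw [contDiff_iff_contDiffAt]
    intro q
    obtain ⟨k, hk⟩ := rr_loc f q.1
    have hsm : ContDiff ℝ (⊤:ℕ∞) (fun p : ℝ × ℝ =>
        (v1 f (p.1 - 6*(k:ℝ)) p.2, v2 f (p.1 - 6*(k:ℝ)) p.2)) :=
      ((contDiff_v1 hf).comp ((contDiff_fst.sub contDiff_const).prodMk contDiff_snd)).prodMk
        ((contDiff_v2 hf).comp ((contDiff_fst.sub contDiff_const).prodMk contDiff_snd))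
    apply hsm.contDiffAt.congr_of_eventuallyEq
    filter_upwards [(continuous_fst.tendsto q).eventually hk] with p hp
    exact hp p.2
  · -- periodicity
    intro x y _
    show uEf f (x + 6) y = uEf f x y
    rw [uEf, uEf, rr_period]
  · -- divergence free
    intro x y _
    obtain ⟨k, hk⟩ := rr_loc f x
    have hpt := hk.self_of_nhds
    have h1 : deriv (fun a => (uEf f a y).1) x = deriv (fun a => v1 f (a - 6*(k:ℝ)) y) x := by
      apply Filter.EventuallyEq.deriv_eq
      filter_upwards [hk] with a ha
      exact congrArg Prod.fst (ha y)
    have h2 : (fun b => (uEf f x b).2) = fun b => v2 f (x - 6*(k:ℝ)) b :=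
      funext fun b => congrArg Prod.snd (hpt b)
    have hc1 : HasDerivAt (fun a => v1 f (a - 6*(k:ℝ)) y)
        ((χ' (x - 6*(k:ℝ)) * f (x - 6*(k:ℝ), y) + χ (x - 6*(k:ℝ)) * pdx f (x - 6*(k:ℝ), y)
          - (χ' (x - 6*(k:ℝ)) * wf f (x - 6*(k:ℝ)) + χ (x - 6*(k:ℝ)) * Af f (x - 6*(k:ℝ), 1))
            * η' y) * 1) x :=
      HasDerivAt.comp x (h := fun x => id x - 6*(k:ℝ)) (hasDerivAt_v1x hf (x - 6*(k:ℝ)) y)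
        ((hasDerivAt_id x).sub_const (6*(k:ℝ)))
    rw [div2, h1, h2, hc1.deriv, (hasDerivAt_v2y hf (x - 6*(k:ℝ)) y).deriv]
    ring
  · -- equality on the square
    intro x hx y hy
    have hrr : rr x = x := rr_Icc01 hx
    show uEf f x y = u x y
    rw [uEf, hrr]
    have e1 : v1 f x y = (u x y).1 := by
      rw [v1, χ_one hx, FW x hx]
      show 1 * f (x, y) + (cf f - 1 * cf f) * η' y = f (x, y)
      ring
    have e2 : v2 f x y = (u x y).2 := by
      rw [v2, χ_one hx, χ'_zero hx, FA x hx y hy, FA1 x hx]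
      show -(0 * pInt f (x, y) + 1 * -g (x, y)) + η y * (0 * wf f x + 1 * 0) = g (x, y)
      ring
    rw [e1, e2]
  · -- boundary values
    intro x
    constructor
    · show v2 f (rr x) 0 = 0
      exact v2_bot _
    · show v2 f (rr x) 1 = 0
      exact v2_top _
  · -- total flux
    have hrw : (∫ x in (0:ℝ)..6, ∫ y in (0:ℝ)..1, (uEf f x y).2)
        = ∫ x in (0:ℝ)..6, Jf f (rr x) := rfl
    rw [hrw]
    have htot : ∀ a b : ℝ, (∫ x in a..b, Jf f x) = Sf f b - Sf f a := fun a b =>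
      intervalIntegral.integral_deriv_eq_sub' (Sf f)
        (funext fun t => (hasDerivAt_Sf hf t).deriv)
        (fun t _ => (hasDerivAt_Sf hf t).differentiableAt)
        (cont_Jf hf).continuousOn
    have e05 : EqOn (fun x => Jf f (rr x)) (Jf f) (uIcc (0:ℝ) 5) := by
      intro x hx
      rw [uIcc_of_le (by norm_num : (0:ℝ) ≤ 5)] at hx
      rcases lt_or_eq_of_le hx.2 with hlt | heq
      · have : rr x = x - 6*((0:ℤ):ℝ) := rr_eq (by push_cast; linarith [hx.1]) (by push_cast; linarith)
        simp only [Int.cast_zero] at this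
        simp only [this]
        norm_num
      · have h5 : rr x = x - 6*((1:ℤ):ℝ) := rr_eq (by push_cast; linarith) (by push_cast; linarith)
        simp only [Int.cast_one] at h5
        show Jf f (rr x) = Jf f x
        rw [h5, Jf_dead (Or.inl (by linarith)), Jf_dead (Or.inr (by linarith))]
    have e56 : EqOn (fun x => Jf f (rr x)) (fun x => Jf f (x - 6)) (uIcc (5:ℝ) 6) := by
      intro x hx
      rw [uIcc_of_le (by norm_num : (5:ℝ) ≤ 6)] at hx
      have h6 : rr x = x - 6*((1:ℤ):ℝ) :=
        rr_eq (by push_cast; linarith [hx.1]) (by push_cast; linarith [hx.2])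
      simp only [Int.cast_one] at h6
      show Jf f (rr x) = Jf f (x - 6)
      rw [h6]
      norm_num
    have hi1 : IntervalIntegrable (fun x => Jf f (rr x)) MeasureTheory.volume 0 5 :=
      ((cont_Jf hf).intervalIntegrable 0 5).congr
        (fun x hx => (e05 (uIoc_subset_uIcc hx)).symm)
    have hi2 : IntervalIntegrable (fun x => Jf f (rr x)) MeasureTheory.volume 5 6 :=
      (((cont_Jf hf).comp (continuous_id.sub continuous_const)).intervalIntegrable 5 6).congr
        (fun x hx => (e56 (uIoc_subset_uIcc hx)).symm)
    have hsplit : (∫ x in (0:ℝ)..6, Jf f (rr x))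
        = (∫ x in (0:ℝ)..5, Jf f (rr x)) + ∫ x in (5:ℝ)..6, Jf f (rr x) :=
      (intervalIntegral.integral_add_adjacent_intervals hi1 hi2).symm
    have h05 : (∫ x in (0:ℝ)..5, Jf f (rr x)) = Sf f 5 - Sf f 0 := by
      rw [intervalIntegral.integral_congr e05, htot]
    have h56 : (∫ x in (5:ℝ)..6, Jf f (rr x)) = Sf f 0 - Sf f (-1) := by
      rw [intervalIntegral.integral_congr e56,
        intervalIntegral.integral_comp_sub_right (fun t => Jf f t) 6]
      norm_num [htot]
    have hS5 : Sf f 5 = 0 := Sf_dead (Or.inr (by norm_num))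
    have hSm1 : Sf f (-1) = 0 := Sf_dead (Or.inl le_rfl)
    rw [hsplit, h05, h56, hS5, hSm1]
    ring
end

section
/- Let B : ℝ×[0,1] → ℝ² be a smooth divergence-free vector field, 6-periodic in the x variable, with ∫_{[0,6]×[0,1]} B¹ dx dy = 0 and B²(x,0) = B²(x,1) = 0 for all x ∈ ℝ. Then there exists a smooth divergence-free vector field B_T : ℝ×[0,1] → ℝ², 6-periodic in x, such that B_T²(x,0) = B_T²(x,1) = 0 for all x; B_T(x,y) = 0 whenever x ∈ [7/4,5] or x ∈ [−1,−3/4]; and B_T(x,y) = B(x,y) for all x ∈ [0,1], y ∈ [0,1]. -/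
open Set intervalIntegral

open Set Filter Real

noncomputable def theta (r : ℝ) : ℝ :=
  smoothTransition (4*(r+3/4)-1) * smoothTransition (4*(7/4-r)-1)

lemma theta_contDiff : ContDiff ℝ (⊤:ℕ∞) theta := by
  apply ContDiff.mul
  · exact smoothTransition.contDiff.comp (by fun_prop)
  · exact smoothTransition.contDiff.comp (by fun_prop)

lemma theta_one {r : ℝ} (h1 : -(1/4) ≤ r) (h2 : r ≤ 5/4) : theta r = 1 := by
  unfold theta
  rw [smoothTransition.one_of_one_le (by linarith), smoothTransition.one_of_one_le (by linarith),
    mul_one]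

lemma theta_zero {r : ℝ} (h : r ≤ -(1/2) ∨ 3/2 ≤ r) : theta r = 0 := by
  unfold theta
  rcases h with h | h
  · rw [smoothTransition.zero_of_nonpos (by linarith), zero_mul]
  · rw [smoothTransition.zero_of_nonpos (by linarith : 4*(7/4-r)-1 ≤ 0), mul_zero]

noncomputable def chi (x : ℝ) : ℝ := theta (x - 6 * ⌊(x+3)/6⌋)

lemma floor_eq_of_mem {t : ℝ} {k : ℤ} (h1 : 6*(k:ℝ)-3 ≤ t) (h2 : t < 6*k+3) :
    ⌊(t+3)/6⌋ = k := by
  rw [Int.floor_eq_iff]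
  constructor
  · rw [le_div_iff₀ (by norm_num)]; linarith
  · rw [div_lt_iff₀ (by norm_num)]; push_cast; linarith

lemma chi_loc {x : ℝ} {k : ℤ} (hx : x ∈ Icc (6*(k:ℝ)-3) (6*k+3)) :
    ∀ t ∈ Ioo (x-1) (x+1), chi t = theta (t - 6*k) := by
  obtain ⟨hx1, hx2⟩ := hx
  intro t ⟨ht1, ht2⟩
  unfold chi
  rcases lt_or_ge t (6*k-3) with h | h
  · rw [show ⌊(t+3)/6⌋ = k - 1 from floor_eq_of_mem (by push_cast; linarith) (by push_cast; linarith)]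
    rw [theta_zero (by push_cast; right; linarith), theta_zero (by left; linarith)]
  rcases lt_or_ge t (6*k+3) with h' | h'
  · rw [floor_eq_of_mem h h']
  · rw [show ⌊(t+3)/6⌋ = k + 1 from floor_eq_of_mem (by push_cast; linarith) (by push_cast; linarith)]
    rw [theta_zero (by push_cast; left; linarith), theta_zero (by right; linarith)]

lemma chi_eventuallyEq {x : ℝ} {k : ℤ} (hx : x ∈ Icc (6*(k:ℝ)-3) (6*k+3)) :
    chi =ᶠ[nhds x] fun t => theta (t - 6*k) := by
  filter_upwards [Ioo_mem_nhds (by linarith : x - 1 < x) (by linarith : x < x + 1)] with t ht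
  exact chi_loc hx t ht

lemma chi_contDiff : ContDiff ℝ (⊤:ℕ∞) chi := by
  rw [contDiff_iff_contDiffAt]
  intro x
  set k := ⌊(x+3)/6⌋ with hk
  have h1 : (k:ℝ) ≤ (x+3)/6 := Int.floor_le _
  have h2 : (x+3)/6 < k + 1 := Int.lt_floor_add_one _
  have hx : x ∈ Icc (6*(k:ℝ)-3) (6*k+3) := by
    constructor
    · rw [le_div_iff₀ (by norm_num : (0:ℝ) < 6)] at h1; linarith
    · rw [div_lt_iff₀ (by norm_num : (0:ℝ) < 6)] at h2; linarith
  exact ContDiffAt.congr_of_eventuallyEq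
    ((theta_contDiff.comp (by fun_prop)).contDiffAt) (chi_eventuallyEq hx)

lemma chi_periodic (x : ℝ) : chi (x + 6) = chi x := by
  unfold chi
  have : (x + 6 + 3)/6 = (x+3)/6 + 1 := by ring
  rw [this, Int.floor_add_one]
  push_cast
  ring_nf

lemma deriv_chi_periodic (x : ℝ) : deriv chi (x + 6) = deriv chi x := by
  have : deriv (fun t => chi (t + 6)) x = deriv chi (x+6) := deriv_comp_add_const chi 6 x
  rw [← this]
  congr 1
  ext t
  exact chi_periodic t

lemma chi_eventually_one {x : ℝ} (h1 : -(1/4) < x) (h2 : x < 5/4) :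
    chi =ᶠ[nhds x] fun _ => 1 := by
  have hx : x ∈ Icc (6*((0:ℤ):ℝ)-3) (6*((0:ℤ):ℝ)+3) := by
    constructor <;> push_cast <;> linarith
  filter_upwards [chi_eventuallyEq hx, Ioo_mem_nhds h1 h2] with t ht ht2
  rw [ht]
  push_cast
  rw [mul_zero, sub_zero]
  exact theta_one (by linarith [ht2.1]) (by linarith [ht2.2])

lemma chi_eventually_zero {x : ℝ} {k : ℤ} (hx : x ∈ Icc (6*(k:ℝ)-3) (6*k+3))
    (h : x < 6*k - 1/2 ∨ 6*k + 3/2 < x) : chi =ᶠ[nhds x] fun _ => 0 := by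
  rcases h with h | h
  · filter_upwards [chi_eventuallyEq hx, Iio_mem_nhds h] with t ht ht2
    rw [ht]; exact theta_zero (Or.inl (by simp only [mem_Iio] at ht2; linarith))
  · filter_upwards [chi_eventuallyEq hx, Ioi_mem_nhds h] with t ht ht2
    rw [ht]; exact theta_zero (Or.inr (by simp only [mem_Ioi] at ht2; linarith))

lemma chi_one_deriv_zero {x : ℝ} (h1 : -(1/4) < x) (h2 : x < 5/4) :
    chi x = 1 ∧ deriv chi x = 0 := by
  have h := chi_eventually_one h1 h2
  exact ⟨h.eq_of_nhds, by rw [h.deriv_eq]; exact deriv_const x 1⟩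

lemma chi_zero_deriv_zero {x : ℝ} (h : x ∈ Icc (7/4:ℝ) 5 ∨ x ∈ Icc (-1:ℝ) (-3/4)) :
    chi x = 0 ∧ deriv chi x = 0 := by
  have h : chi =ᶠ[nhds x] fun _ => 0 := by
    rcases h with ⟨h1, h2⟩ | ⟨h1, h2⟩
    · rcases le_or_gt x 3 with h3 | h3
      · exact chi_eventually_zero (k := 0) (by constructor <;> push_cast <;> linarith)
          (by right; push_cast; linarith)
      · exact chi_eventually_zero (k := 1) (by constructor <;> push_cast <;> linarith)
          (by left; push_cast; linarith)
    · exact chi_eventually_zero (k := 0) (by constructor <;> push_cast <;> linarith)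
        (by left; push_cast; linarith)
  exact ⟨h.eq_of_nhds, by rw [h.deriv_eq]; exact deriv_const x 0⟩

set_option maxHeartbeats 1000000
set_option synthInstance.maxHeartbeats 1000000

open Set Filter MeasureTheory intervalIntegral Metric

variable {H : Type} [NormedAddCommGroup H] [NormedSpace ℝ H] [ProperSpace H]

lemma norm_comp_inl_le {E : Type} [NormedAddCommGroup E] [NormedSpace ℝ E]
    (A : (H × ℝ) →L[ℝ] E) : ‖A.comp (ContinuousLinearMap.inl ℝ H ℝ)‖ ≤ ‖A‖ := by
  apply ContinuousLinearMap.opNorm_le_bound _ (norm_nonneg A)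
  intro x
  have : ‖(ContinuousLinearMap.inl ℝ H ℝ) x‖ = ‖x‖ := by
    simp [Prod.norm_def]
  calc ‖A ((x, 0))‖ ≤ ‖A‖ * ‖((x, (0:ℝ)))‖ := A.le_opNorm _
    _ = ‖A‖ * ‖x‖ := by rw [show ((x,(0:ℝ))) = (ContinuousLinearMap.inl ℝ H ℝ) x from rfl, this]

lemma par_hasFDerivAt {E : Type} [NormedAddCommGroup E] [NormedSpace ℝ E] [CompleteSpace E]
    (f : H × ℝ → E) (hf : ContDiff ℝ (⊤:ℕ∞) f) (x₀ : H) :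
    HasFDerivAt (fun x => ∫ s in (0:ℝ)..1, f (x, s))
      (∫ s in (0:ℝ)..1, (fderiv ℝ f (x₀, s)).comp (ContinuousLinearMap.inl ℝ H ℝ)) x₀ := by
  have hfd : Differentiable ℝ f := hf.differentiable (by simp)
  have hfc : Continuous f := hf.continuous
  have hf' : Continuous (fun p => fderiv ℝ f p) :=
    hf.continuous_fderiv (by simp)
  -- bound on compact set
  obtain ⟨M, hM⟩ := (isCompact_closedBall x₀ 1).prod isCompact_Icc
    |>.exists_bound_of_continuousOn (f := fun p : H × ℝ => fderiv ℝ f p)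
    (hf'.continuousOn)
  have key := hasFDerivAt_integral_of_dominated_of_fderiv_le (𝕜 := ℝ) (μ := volume)
    (F := fun x s => f (x, s))
    (F' := fun x s => (fderiv ℝ f (x, s)).comp (ContinuousLinearMap.inl ℝ H ℝ))
    (x₀ := x₀) (a := 0) (b := 1) (bound := fun _ => M) (s := ball x₀ 1)
    (ball_mem_nhds x₀ one_pos)
    (by filter_upwards with x; exact (hfc.comp (by fun_prop)).aestronglyMeasurable)
    ((hfc.comp (by fun_prop)).intervalIntegrable 0 1)
    (by
      apply Continuous.aestronglyMeasurable
      exact ((ContinuousLinearMap.compL ℝ H (H × ℝ) E).flip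
        (ContinuousLinearMap.inl ℝ H ℝ)).continuous.comp (hf'.comp (by fun_prop)))
    (by
      filter_upwards with t ht x hx
      calc ‖(fderiv ℝ f (x, t)).comp (ContinuousLinearMap.inl ℝ H ℝ)‖
          ≤ ‖fderiv ℝ f (x, t)‖ := norm_comp_inl_le _
        _ ≤ M := hM (x, t) ⟨ball_subset_closedBall hx, by
            rw [uIoc_of_le (by norm_num)] at ht; exact ⟨ht.1.le, ht.2⟩⟩)
    (intervalIntegrable_const)
    (by
      filter_upwards with t ht x hx
      exact ((hfd (x, t)).hasFDerivAt).comp x (hasFDerivAt_prodMk_left x t))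
  exact key

lemma par_contDiff : ∀ (n : ℕ) {E : Type} [NormedAddCommGroup E] [NormedSpace ℝ E]
    [CompleteSpace E] (f : H × ℝ → E), ContDiff ℝ (⊤:ℕ∞) f →
    ContDiff ℝ (n:ℕ) (fun x : H => ∫ s in (0:ℝ)..1, f (x, s)) := by
  intro n
  induction n with
  | zero =>
    intro E _ _ _ f hf
    rw [show ((0:ℕ):WithTop ℕ∞) = 0 by rfl, contDiff_zero]
    have : (fun x : H => ∫ s in (0:ℝ)..1, f (x, s))
        = fun x : H => ∫ s in Icc (0:ℝ) 1, f (x, s) := by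
      ext x
      rw [intervalIntegral.integral_of_le (by norm_num), MeasureTheory.integral_Icc_eq_integral_Ioc]
    rw [this]
    exact continuous_parametric_integral_of_continuous (f := fun x s => f (x, s))
      (by exact hf.continuous.comp (by fun_prop)) isCompact_Icc
  | succ n ih =>
    intro E _ _ _ f hf
    rw [show ((n+1:ℕ):WithTop ℕ∞) = (n:ℕ) + 1 by push_cast; rfl, contDiff_succ_iff_fderiv]
    refine ⟨fun x => (par_hasFDerivAt f hf x).differentiableAt, by simp, ?_⟩
    have heq : fderiv ℝ (fun x : H => ∫ s in (0:ℝ)..1, f (x, s))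
        = fun x : H => ∫ s in (0:ℝ)..1,
            ((ContinuousLinearMap.compL ℝ H (H × ℝ) E).flip
              (ContinuousLinearMap.inl ℝ H ℝ)) (fderiv ℝ f (x, s)) := by
      ext1 x
      exact (par_hasFDerivAt f hf x).fderiv
    rw [heq]
    exact ih (fun p => ((ContinuousLinearMap.compL ℝ H (H × ℝ) E).flip
        (ContinuousLinearMap.inl ℝ H ℝ)) (fderiv ℝ f p))
      ((((ContinuousLinearMap.compL ℝ H (H × ℝ) E).flip
        (ContinuousLinearMap.inl ℝ H ℝ)).contDiff).comp (hf.fderiv_right (by simp)))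

lemma par_contDiff_top {E : Type} [NormedAddCommGroup E] [NormedSpace ℝ E]
    [CompleteSpace E] (f : H × ℝ → E) (hf : ContDiff ℝ (⊤:ℕ∞) f) :
    ContDiff ℝ (⊤:ℕ∞) (fun x : H => ∫ s in (0:ℝ)..1, f (x, s)) := by
  rw [show ((⊤:ℕ∞):WithTop ℕ∞) = (⊤:ℕ∞) from rfl, contDiff_infty]
  exact fun n => par_contDiff n f hf

theorem truncation_to_compact_support
    (B : ℝ → ℝ → ℝ × ℝ)
    (hB : ContDiff ℝ (⊤ : ℕ∞) (fun q : ℝ × ℝ => B q.1 q.2))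
    (hper : ∀ x : ℝ, ∀ y ∈ Icc (0:ℝ) 1, B (x + 6) y = B x y)
    (hdiv : ∀ x : ℝ, ∀ y ∈ Icc (0:ℝ) 1, div2 B x y = 0)
    (hbc : ∀ x : ℝ, (B x 0).2 = 0 ∧ (B x 1).2 = 0)
    (hmean : (∫ x in (0:ℝ)..6, ∫ y in (0:ℝ)..1, (B x y).1) = 0) :
    ∃ BT : ℝ → ℝ → ℝ × ℝ,
      ContDiff ℝ (⊤ : ℕ∞) (fun q : ℝ × ℝ => BT q.1 q.2) ∧
      (∀ x : ℝ, ∀ y ∈ Icc (0:ℝ) 1, BT (x + 6) y = BT x y) ∧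
      (∀ x : ℝ, ∀ y ∈ Icc (0:ℝ) 1, div2 BT x y = 0) ∧
      (∀ x : ℝ, (BT x 0).2 = 0 ∧ (BT x 1).2 = 0) ∧
      (∀ x : ℝ, ∀ y ∈ Icc (0:ℝ) 1,
        (x ∈ Icc (7/4 : ℝ) 5 ∨ x ∈ Icc (-1 : ℝ) (-3/4)) → BT x y = 0) ∧
      (∀ x ∈ Icc (0:ℝ) 1, ∀ y ∈ Icc (0:ℝ) 1, BT x y = B x y) := by

  have hB1 : ContDiff ℝ (⊤:ℕ∞) (fun q : ℝ × ℝ => (B q.1 q.2).1) := contDiff_fst.comp hB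
  have hB2 : ContDiff ℝ (⊤:ℕ∞) (fun q : ℝ × ℝ => (B q.1 q.2).2) := contDiff_snd.comp hB
  have hB1x : ∀ y : ℝ, ContDiff ℝ (⊤:ℕ∞) (fun a => (B a y).1) :=
    fun y => hB1.comp (contDiff_id.prodMk contDiff_const)
  have hB2y : ∀ x : ℝ, ContDiff ℝ (⊤:ℕ∞) (fun b => (B x b).2) :=
    fun x => hB2.comp (contDiff_const.prodMk contDiff_id)
  have hB1c : ∀ x : ℝ, Continuous (fun t => (B x t).1) :=
    fun x => (hB1.comp (contDiff_const.prodMk contDiff_id)).continuous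
  -- the stream function
  set ψ : ℝ × ℝ → ℝ := (fun p => ∫ s in (0:ℝ)..1, p.2 * (B p.1 (s * p.2)).1) with hψdef
  have hψ : ContDiff ℝ (⊤:ℕ∞) ψ := by
    apply par_contDiff_top (fun w : (ℝ×ℝ)×ℝ => w.1.2 * (B w.1.1 (w.2 * w.1.2)).1)
    have hin : ContDiff ℝ (⊤:ℕ∞) (fun w : (ℝ×ℝ)×ℝ => ((w.1.1, w.2 * w.1.2) : ℝ × ℝ)) :=
      (contDiff_fst.comp contDiff_fst).prodMk
        (contDiff_snd.mul (contDiff_snd.comp contDiff_fst))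
    exact (contDiff_snd.comp contDiff_fst).mul (hB1.comp hin)
  have ψ_eq : ∀ x y : ℝ, ψ (x, y) = ∫ t in (0:ℝ)..y, (B x t).1 := by
    intro x y
    rcases eq_or_ne y 0 with rfl | hy
    · simp [hψdef]
    · rw [hψdef]
      simp only
      rw [intervalIntegral.integral_const_mul,
        intervalIntegral.integral_comp_mul_right (fun t => (B x t).1) hy]
      simp only [zero_mul, one_mul, smul_eq_mul]
      field_simp
  -- derivative of ψ in y
  have hψy : ∀ x y : ℝ, HasDerivAt (fun b => ψ (x, b)) ((B x y).1) y := by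
    intro x y
    rw [show (fun b => ψ (x, b)) = fun b => ∫ t in (0:ℝ)..b, (B x t).1 from
      funext (ψ_eq x)]
    exact integral_hasDerivAt_right ((hB1c x).intervalIntegrable _ _)
      ((hB1c x).stronglyMeasurableAtFilter _ _) (hB1c x).continuousAt
  -- the function x ↦ ∫_0^1 B¹(x,s) ds has zero derivative
  have g_hasDeriv : ∀ x : ℝ, HasDerivAt (fun u => ∫ s in (0:ℝ)..1, (B u s).1) 0 x := by
    intro x
    have h := (par_hasFDerivAt (H := ℝ) (fun w : ℝ × ℝ => (B w.1 w.2).1) hB1 x).hasDerivAt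
    convert h using 1
    case e'_4 => rfl
    case e'_5 => rfl
    set A : ℝ → (ℝ →L[ℝ] ℝ) := fun s =>
      (fderiv ℝ (fun w : ℝ × ℝ => (B w.1 w.2).1) (x, s)).comp (ContinuousLinearMap.inl ℝ ℝ ℝ)
      with hA
    have hAcont : Continuous A := by
      rw [hA]
      exact (((ContinuousLinearMap.compL ℝ ℝ (ℝ × ℝ) ℝ).flip
        (ContinuousLinearMap.inl ℝ ℝ ℝ)).continuous).comp
        ((hB1.continuous_fderiv (by simp)).comp (by fun_prop))
    have happ : (∫ s in (0:ℝ)..1, A s) 1 = ∫ s in (0:ℝ)..1, A s 1 := by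
      rw [intervalIntegral.integral_of_le zero_le_one,
        intervalIntegral.integral_of_le zero_le_one]
      exact ContinuousLinearMap.integral_apply hAcont.integrableOn_Ioc 1
    rw [happ]
    have hA1 : ∀ s : ℝ, A s 1 = deriv (fun a => (B a s).1) x := by
      intro s
      have hs : HasDerivAt (fun a => (B a s).1) (A s 1) x :=
        (((hB1.differentiable (by simp)) (x, s)).hasFDerivAt.comp (f := fun e : ℝ => (e, s)) x
          (hasFDerivAt_prodMk_left x s)).hasDerivAt
      exact hs.deriv.symm
    have hcongr : ∀ s ∈ Set.uIcc (0:ℝ) 1, A s 1 = -deriv (fun b => (B x b).2) s := by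
      intro s hs'
      rw [hA1 s]
      have hd := hdiv x s (by rwa [Set.uIcc_of_le zero_le_one] at hs')
      unfold div2 at hd
      linarith
    rw [intervalIntegral.integral_congr hcongr, intervalIntegral.integral_neg,
      intervalIntegral.integral_deriv_eq_sub
        (fun t _ => ((hB2y x).differentiable (by simp)).differentiableAt)
        (((contDiff_infty_iff_deriv.mp (hB2y x)).2.continuous).intervalIntegrable _ _),
      (hbc x).1, (hbc x).2]
    norm_num
  have g_zero : ∀ u : ℝ, (∫ s in (0:ℝ)..1, (B u s).1) = 0 := by
    have hdiffg : Differentiable ℝ (fun u : ℝ => ∫ s in (0:ℝ)..1, (B u s).1) :=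
      fun u => (g_hasDeriv u).differentiableAt
    have hconst : ∀ u v : ℝ,
        (∫ s in (0:ℝ)..1, (B u s).1) = ∫ s in (0:ℝ)..1, (B v s).1 :=
      fun u v => is_const_of_deriv_eq_zero hdiffg (fun w => (g_hasDeriv w).deriv) u v
    intro u
    have h0 : (∫ x in (0:ℝ)..6, ∫ y in (0:ℝ)..1, (B x y).1)
        = ∫ _x in (0:ℝ)..6, ((∫ s in (0:ℝ)..1, (B u s).1) : ℝ) :=
      intervalIntegral.integral_congr (fun x _ => hconst x u)
    rw [h0, intervalIntegral.integral_const, smul_eq_mul] at hmean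
    linarith
  have ψ1 : ∀ x : ℝ, ψ (x, 1) = 0 := fun x => by rw [ψ_eq]; exact g_zero x
  have ψ0 : ∀ x : ℝ, ψ (x, 0) = 0 := fun x => by
    rw [ψ_eq]; exact intervalIntegral.integral_same
  have hχd : Differentiable ℝ chi := chi_contDiff.differentiable (by simp)
  have hχ'cd : ContDiff ℝ (⊤:ℕ∞) (deriv chi) := (contDiff_infty_iff_deriv.mp chi_contDiff).2
  refine ⟨fun x y => (chi x * (B x y).1,
      -(deriv chi x) * ψ (x, y) + chi x * (B x y).2), ?_, ?_, ?_, ?_, ?_, ?_⟩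
  · apply ContDiff.prodMk
    · exact (chi_contDiff.comp contDiff_fst).mul hB1
    · exact (((hχ'cd.comp contDiff_fst).neg).mul
        (hψ.comp (contDiff_fst.prodMk contDiff_snd))).add
        ((chi_contDiff.comp contDiff_fst).mul hB2)
  · intro x y hy
    have hBp := hper x y hy
    have hψp : ψ (x + 6, y) = ψ (x, y) := by
      rw [ψ_eq, ψ_eq]
      apply intervalIntegral.integral_congr
      intro t ht
      rw [Set.uIcc_of_le hy.1] at ht
      exact congrArg Prod.fst (hper x t ⟨ht.1, le_trans ht.2 hy.2⟩)
    simp only [chi_periodic, deriv_chi_periodic, hBp, hψp]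
  · intro x y hy
    have hd1 : HasDerivAt (fun a => (B a y).1) (deriv (fun a => (B a y).1) x) x :=
      (((hB1x y).differentiable (by simp)) x).hasDerivAt
    have hχx : HasDerivAt chi (deriv chi x) x := (hχd x).hasDerivAt
    have hd2 : HasDerivAt (fun b => (B x b).2) (deriv (fun b => (B x b).2) y) y :=
      (((hB2y x).differentiable (by simp)) y).hasDerivAt
    have e1 := (hχx.mul hd1).deriv
    have e2 := (((hψy x y).const_mul (-(deriv chi x))).add (hd2.const_mul (chi x))).deriv
    simp only [Pi.mul_def, Pi.add_def] at e1 e2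
    have hd := hdiv x y hy
    unfold div2 at hd ⊢
    show deriv (fun a => chi a * (B a y).1) x
      + deriv (fun b => -(deriv chi x) * ψ (x, b) + chi x * (B x b).2) y = 0
    rw [e1, e2]
    linear_combination (chi x) * hd
  · intro x
    constructor
    · show -(deriv chi x) * ψ (x, 0) + chi x * (B x 0).2 = 0
      rw [ψ0, (hbc x).1]; ring
    · show -(deriv chi x) * ψ (x, 1) + chi x * (B x 1).2 = 0
      rw [ψ1, (hbc x).2]; ring
  · intro x y _ h
    obtain ⟨h0, h0'⟩ := chi_zero_deriv_zero h
    show (chi x * (B x y).1, -(deriv chi x) * ψ (x, y) + chi x * (B x y).2) = 0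
    rw [h0, h0']
    simp
  · intro x hx y _
    obtain ⟨h1, h1'⟩ := chi_one_deriv_zero
      (by linarith [hx.1] : -(1/4) < x) (by linarith [hx.2] : x < 5/4)
    show (chi x * (B x y).1, -(deriv chi x) * ψ (x, y) + chi x * (B x y).2) = B x y
    rw [h1, h1']
    simp
end
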